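/- Let G ≤ Aut(T) be a finitely generated regular branch group containing a finite subgroup Q that fixes no boundary point of T (for every ξ ∈ ∂T some element of Q moves some finite initial segment of ξ). Then the set of weakly maximal subgroups of G that contain Q and are not parabolic (not equal to the stabilizer in G of any boundary point) is uncountable. -/

import Mathlib

/-!
For a ray `ζ`, the rigid stabilizers of the vertices lying off the finite orbit `Q • ζ` generate
a subgroup that fixes `ζ` and is normalized by `Q`. Ray stabilizers have infinite index in a
spherically transitive group, so together with the finite group `Q` they still generate a
subgroup `Y(ζ)` of infinite index, and since `G` is finitely generated Zorn's lemma puts `Y(ζ)`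
inside a weakly maximal subgroup `W(ζ)`. It contains `Q`, hence is not parabolic. If
`W(ζ) = W(η)` with `η ∉ Q • ζ`, then at some level `n` every vertex lies off `Q • ζ` or off
`Q • η`, so `W(ζ)` contains the rigid stabilizers of the whole level `n`; these generate a
subgroup containing `ψₙ⁻¹(K × ⋯ × K)`, which has finite index in the regular branch group `G`,
a contradiction.
So `ζ ↦ W(ζ)` has finite fibres on the uncountable boundary.
-/

/-- Vertices of the `d`-regular rooted tree: finite words over `Fin d`. -/
abbrev Vtx (d : ℕ) := List (Fin d)

/-- A permutation of the vertex set is a tree automorphism if it fixes the root and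
maps children of a vertex to children of its image. -/
def IsTreeAut (d : ℕ) (g : Equiv.Perm (Vtx d)) : Prop :=
  g [] = [] ∧ ∀ (v : Vtx d) (x : Fin d), ∃ y : Fin d, g (v ++ [x]) = g v ++ [y]

/-- The initial raySegment of length `n` of a boundary point `ξ : ℕ → Fin d`. -/
def raySegment {d : ℕ} (ξ : ℕ → Fin d) (n : ℕ) : Vtx d := List.ofFn fun i : Fin n => ξ i

/-- The vertices at level `n`. -/
abbrev Level (d n : ℕ) := {v : Vtx d // v.length = n}

/-- A group of tree automorphisms is spherically transitive if it acts transitively on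
each level. -/
def SphericallyTransitive {d : ℕ} (G : Subgroup (Equiv.Perm (Vtx d))) : Prop :=
  ∀ u v : Vtx d, u.length = v.length → ∃ g ∈ G, g u = v

/-- A group of tree automorphisms is self-similar if all sections of its elements
belong to it. -/
def SelfSimilar {d : ℕ} (G : Subgroup (Equiv.Perm (Vtx d))) : Prop :=
  ∀ g ∈ G, ∀ v : Vtx d, ∃ h ∈ G, ∀ w : Vtx d, g (v ++ w) = g v ++ h w

/-- The image of `H ∩ Stab(n)` under the map `ψₙ` sending an automorphism fixing level `n`
to the tuple of its sections at the vertices of level `n`. -/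
def psiImage {d : ℕ} (H : Subgroup (Equiv.Perm (Vtx d))) (n : ℕ) :
    Subgroup (Level d n → Equiv.Perm (Vtx d)) where
  carrier := {h | ∃ g ∈ H, (∀ v : Level d n, g v.1 = v.1) ∧
      ∀ (v : Level d n) (w : Vtx d), g (v.1 ++ w) = v.1 ++ h v w}
  one_mem' := ⟨1, H.one_mem, fun _ => rfl, fun _ _ => rfl⟩
  mul_mem' := by
    rintro a b ⟨g, hg, hgf, hga⟩ ⟨g', hg', hg'f, hg'a⟩
    refine ⟨g * g', H.mul_mem hg hg', fun v => ?_, fun v w => ?_⟩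
    · rw [Equiv.Perm.mul_apply, hg'f v, hgf v]
    · rw [Equiv.Perm.mul_apply, hg'a v w, hga v (b v w)]; rfl
  inv_mem' := by
    rintro a ⟨g, hg, hgf, hga⟩
    refine ⟨g⁻¹, H.inv_mem hg, fun v => ?_, fun v w => ?_⟩
    · apply g.injective
      rw [show g (g⁻¹ v.1) = v.1 from g.apply_symm_apply _, hgf v]
    · apply g.injective
      rw [show g (g⁻¹ (v.1 ++ w)) = v.1 ++ w from g.apply_symm_apply _, hga v (a⁻¹ v w)]
      show v.1 ++ w = v.1 ++ a v ((a v)⁻¹ w)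
      rw [show a v ((a v)⁻¹ w) = w from (a v).apply_symm_apply _]

/-- `G ≤ Aut(T)` is regular branch over `K` if it consists of tree automorphisms, is
spherically transitive and self-similar, and `K ≤ G` is a finite-index subgroup such that
`ψ₁(K ∩ Stab(1))` contains `K^d` as a subgroup of finite index. -/
structure IsRegularBranch (d : ℕ) (G K : Subgroup (Equiv.Perm (Vtx d))) : Prop where
  treeAut : ∀ g ∈ G, IsTreeAut d g
  transitive : SphericallyTransitive G
  selfSimilar : SelfSimilar G
  le : K ≤ G
  relindex_ne_zero : K.relIndex G ≠ 0
  pi_le : Subgroup.pi Set.univ (fun _ : Level d 1 => K) ≤ psiImage K 1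
  pi_relindex_ne_zero :
    (Subgroup.pi Set.univ (fun _ : Level d 1 => K)).relIndex (psiImage K 1) ≠ 0

/-- `H` is a weakly maximal subgroup of (the subgroup) `G` if `H ≤ G`, `H` has infinite
index in `G`, and every subgroup of `G` strictly containing `H` has finite index in `G`. -/
def IsWeaklyMaximalIn {P : Type*} [Group P] (G H : Subgroup P) : Prop :=
  H ≤ G ∧ H.relIndex G = 0 ∧
    ∀ M : Subgroup P, M ≤ G → H < M → M.relIndex G ≠ 0

/-- The stabilizer in `G` of a boundary point `ξ` (a parabolic subgroup). -/
def rayStab {d : ℕ} (G : Subgroup (Equiv.Perm (Vtx d))) (ξ : ℕ → Fin d) :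
    Subgroup (Equiv.Perm (Vtx d)) where
  carrier := {g | g ∈ G ∧ ∀ n : ℕ, g (raySegment ξ n) = raySegment ξ n}
  one_mem' := ⟨G.one_mem, fun _ => rfl⟩
  mul_mem' := by
    rintro a b ⟨ha, ha2⟩ ⟨hb, hb2⟩
    exact ⟨G.mul_mem ha hb, fun n => by rw [Equiv.Perm.mul_apply, hb2 n, ha2 n]⟩
  inv_mem' := by
    rintro a ⟨ha, ha2⟩
    refine ⟨G.inv_mem ha, fun n => ?_⟩
    conv_lhs => rw [← ha2 n]
    exact a.symm_apply_apply (raySegment ξ n)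

/-- The rigid stabilizer of a vertex `v` in `G`: elements of `G` fixing every vertex not
having `v` as a prefix. -/
def rist {d : ℕ} (G : Subgroup (Equiv.Perm (Vtx d))) (v : Vtx d) :
    Subgroup (Equiv.Perm (Vtx d)) where
  carrier := {g | g ∈ G ∧ ∀ w : Vtx d, ¬ v <+: w → g w = w}
  one_mem' := ⟨G.one_mem, fun _ _ => rfl⟩
  mul_mem' := by
    rintro a b ⟨ha, ha2⟩ ⟨hb, hb2⟩
    exact ⟨G.mul_mem ha hb, fun w hw => by rw [Equiv.Perm.mul_apply, hb2 w hw, ha2 w hw]⟩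
  inv_mem' := by
    rintro a ⟨ha, ha2⟩
    refine ⟨G.inv_mem ha, fun w hw => ?_⟩
    conv_lhs => rw [← ha2 w hw]
    exact a.symm_apply_apply w

namespace Subgroup

variable {P : Type*} [Group P]

theorem relIndex_ne_zero_of_labelling {β : Type*} [Finite β] {H L : Subgroup P}
    (R : P → β → Prop) (hR : ∀ g ∈ L, ∃ b, R g b)
    (hH : ∀ g ∈ L, ∀ g' ∈ L, ∀ b, R g b → R g' b → g⁻¹ * g' ∈ H) : H.relIndex L ≠ 0 := by
  choose f hf using hR
  have : Finite (L ⧸ H.subgroupOf L) := by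
    refine Finite.of_injective (fun q => f _ (Quotient.out q).2) fun q q' hqq' => ?_
    rw [← QuotientGroup.out_eq' q, ← QuotientGroup.out_eq' q', QuotientGroup.eq, mem_subgroupOf]
    have hf' : f _ (Quotient.out q).2 = f _ (Quotient.out q').2 := hqq'
    exact hH _ (Quotient.out q).2 _ (Quotient.out q').2 _ (hf _ _) (hf' ▸ hf _ (Quotient.out q').2)
  exact index_ne_zero_of_finite

theorem relIndex_sup_ne_zero_of_le_normalizer {Q N : Subgroup P} (hQ : (Q : Set P).Finite)
    (hQN : Q ≤ normalizer (N : Set P)) : N.relIndex (Q ⊔ N) ≠ 0 := by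
  have := hQ.to_subtype
  refine relIndex_ne_zero_of_labelling (β := (Q : Set P)) (fun y q => (q : P)⁻¹ * y ∈ N)
    (fun y hy => ?_) (fun y _ y' _ q hy hy' => ?_)
  · rw [← SetLike.mem_coe, coe_mul_of_left_le_normalizer_right Q N hQN] at hy
    obtain ⟨q, hq, n, hn, rfl⟩ := hy
    exact ⟨⟨q, hq⟩, by rwa [inv_mul_cancel_left]⟩
  · simpa [mul_assoc] using N.mul_mem (N.inv_mem hy) hy'

theorem FG.exists_mem_le_of_le_sSup {c : Set (Subgroup P)} (hne : c.Nonempty)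
    (hc : DirectedOn (· ≤ ·) c) {U : Subgroup P} (hU : U.FG) (hle : U ≤ sSup c) :
    ∃ M ∈ c, U ≤ M := by
  obtain ⟨T, rfl⟩ := hU
  obtain ⟨M, hM, hTM⟩ := DirectedOn.exists_mem_subset_of_finset_subset_biUnion
    (f := fun M : Subgroup P => (M : Set P)) hne hc (s := T) fun t ht => by
      obtain ⟨M, hM, htM⟩ := (mem_sSup_of_directedOn hne hc).1 (hle (subset_closure ht))
      exact Set.mem_biUnion hM htM
  exact ⟨M, hM, (closure_le M).2 hTM⟩

theorem fg_of_relIndex_ne_zero {G U : Subgroup P} [Group.FG G] (hUG : U ≤ G)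
    (hU : U.relIndex G ≠ 0) : U.FG := by
  classical
  have : (U.subgroupOf G).FiniteIndex := ⟨hU⟩
  obtain ⟨T, hT⟩ := (Group.fg_iff_subgroup_fg _).1 (fg_of_index_ne_zero (U.subgroupOf G))
  refine ⟨T.image G.subtype, ?_⟩
  rw [Finset.coe_image, ← MonoidHom.map_closure, hT, subgroupOf_map_subtype, inf_of_le_left hUG]

end Subgroup

theorem exists_isWeaklyMaximalIn_ge {P : Type*} [Group P] {G H : Subgroup P} (hG : Group.FG G)
    (hHG : H ≤ G) (hH : H.relIndex G = 0) : ∃ W, H ≤ W ∧ IsWeaklyMaximalIn G W := by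
  have hchains : ∀ c ⊆ {M | M ≤ G ∧ M.relIndex G = 0}, IsChain (· ≤ ·) c →
      ∀ M ∈ c, ∃ U ∈ {M | M ≤ G ∧ M.relIndex G = 0}, ∀ M ∈ c, M ≤ U := by
    intro c hc hchain M hM
    have hcG : sSup c ≤ G := sSup_le fun M hM => (hc hM).1
    refine ⟨sSup c, ⟨hcG, ?_⟩, fun _ => le_sSup⟩
    by_contra hc0
    obtain ⟨M', hM'c, hM'⟩ := (Subgroup.fg_of_relIndex_ne_zero hcG hc0).exists_mem_le_of_le_sSup
      ⟨M, hM⟩ hchain.directedOn le_rfl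
    exact hc0 (Subgroup.relIndex_eq_zero_of_le_left hM' (hc hM'c).2)
  obtain ⟨W, hHW, ⟨hWG, hW⟩, hmax⟩ := zorn_le_nonempty₀ _ hchains H ⟨hHG, hH⟩
  exact ⟨W, hHW, hWG, hW, fun M hMG hWM hM => hWM.not_ge (hmax ⟨hMG, hM⟩ hWM.le)⟩

open Equiv Filter Subgroup MulAction

variable {d : ℕ}

theorem List.exists_eq_append_singleton_of_length_eq_succ {α : Type*} {w : List α} {n : ℕ}
    (hw : w.length = n + 1) : ∃ v x, v.length = n ∧ w = v ++ [x] := by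
  rcases w.eq_nil_or_concat' with rfl | ⟨v, x, rfl⟩
  · simp at hw
  · exact ⟨v, x, by simpa using hw, rfl⟩

theorem List.eq_of_prefix_append_of_length_eq {α : Type*} {a v w : List α} (h : a <+: v ++ w)
    (hlen : a.length = v.length) : a = v :=
  (List.prefix_of_prefix_length_le h (List.prefix_append v w) hlen.le).eq_of_length hlen

namespace IsTreeAut

variable {g : Perm (Vtx d)}

theorem length_apply (hg : IsTreeAut d g) (v : Vtx d) : (g v).length = v.length := by
  induction v using List.reverseRecOn with
  | nil => rw [hg.1]
  | append_singleton v x ih =>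
    obtain ⟨y, hy⟩ := hg.2 v x
    simp [hy, ih]

theorem exists_apply_append (hg : IsTreeAut d g) (v w : Vtx d) :
    ∃ s : Vtx d, s.length = w.length ∧ g (v ++ w) = g v ++ s := by
  induction w using List.reverseRecOn with
  | nil => exact ⟨[], rfl, by simp⟩
  | append_singleton w x ih =>
    obtain ⟨s, hs, hgs⟩ := ih
    obtain ⟨y, hy⟩ := hg.2 (v ++ w) x
    exact ⟨s ++ [y], by simp [hs], by rw [← List.append_assoc, hy, hgs, List.append_assoc]⟩

theorem apply_take (hg : IsTreeAut d g) (v : Vtx d) (n : ℕ) : g (v.take n) = (g v).take n := by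
  obtain ⟨s, hs, h⟩ := hg.exists_apply_append (v.take n) (v.drop n)
  rw [List.take_append_drop] at h
  have hlen : (g (v.take n)).length = min n v.length := by simp [hg.length_apply]
  have hs' : s.take (n - (g (v.take n)).length) = [] := by
    rw [List.take_eq_nil_iff, hlen]
    rcases le_or_gt n v.length with hn | hn
    · exact .inl (by omega)
    · exact .inr (List.eq_nil_of_length_eq_zero (by simp [hs]; omega))
  rw [h, List.take_append, List.take_of_length_le (l := g (v.take n)) (by omega), hs',
    List.append_nil]

theorem apply_prefix (hg : IsTreeAut d g) {v w : Vtx d} (h : v <+: w) : g v <+: g w := by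
  rw [List.prefix_iff_eq_take] at h ⊢
  conv_rhs => rw [hg.length_apply]
  rw [h, hg.apply_take, ← h]

end IsTreeAut

theorem length_raySegment (ξ : ℕ → Fin d) (n : ℕ) : (raySegment ξ n).length = n := by
  simp [raySegment]

theorem take_raySegment (ξ : ℕ → Fin d) {m n : ℕ} (h : m ≤ n) :
    (raySegment ξ n).take m = raySegment ξ m := by
  apply List.ext_getElem
  · simp [raySegment]; omega
  · intro i _ _
    simp [raySegment]

theorem raySegment_injective : Function.Injective (raySegment : (ℕ → Fin d) → ℕ → Vtx d) := by
  intro ξ η h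
  funext n
  have := List.ofFn_inj.mp (congrFun h (n + 1))
  exact congrFun this (Fin.last n)

theorem IsTreeAut.eventually_apply_raySegment_ne {g : Perm (Vtx d)} (hg : IsTreeAut d g)
    {ζ η : ℕ → Fin d} (h : ∃ n, g (raySegment ζ n) ≠ raySegment η n) :
    ∀ᶠ m in atTop, g (raySegment ζ m) ≠ raySegment η m := by
  obtain ⟨n, hn⟩ := h
  filter_upwards [eventually_ge_atTop n] with m hm heq
  rw [← take_raySegment ζ hm, hg.apply_take, heq, take_raySegment η hm] at hn
  exact hn rfl

/-- `g` fixes `v` and its section there is `g_v = k`. -/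
def HasSection (g : Perm (Vtx d)) (v : Vtx d) (k : Perm (Vtx d)) : Prop :=
  ∀ w, g (v ++ w) = v ++ k w

namespace HasSection

variable {g g' k k' : Perm (Vtx d)} {v : Vtx d}

theorem one (v : Vtx d) : HasSection 1 v 1 := fun _ => rfl

theorem mul (h : HasSection g v k) (h' : HasSection g' v k') : HasSection (g * g') v (k * k') :=
  fun w => by simp only [Perm.mul_apply, h' w, h (k' w)]

theorem inv (h : HasSection g v k) : HasSection g⁻¹ v k⁻¹ :=
  fun w => by rw [Perm.inv_eq_iff_eq, h]; simp

theorem trans (h : HasSection g v k) {u : Vtx d} (h' : HasSection k u k') :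
    HasSection g (v ++ u) k' :=
  fun w => by rw [List.append_assoc, h, h', List.append_assoc]

theorem nil_iff : HasSection g [] k ↔ g = k := by
  simp [HasSection, Equiv.ext_iff]

end HasSection

/-- The subgroup `ψₙ⁻¹(K × ⋯ × K)` of `Stab(n)`. -/
def levelProd (K : Subgroup (Perm (Vtx d))) (n : ℕ) : Subgroup (Perm (Vtx d)) where
  carrier := {g | (∀ w : Vtx d, w.length ≤ n → g w = w) ∧
    ∀ v : Vtx d, v.length = n → ∃ k ∈ K, HasSection g v k}
  one_mem' := ⟨fun _ _ => rfl, fun v _ => ⟨1, K.one_mem, HasSection.one v⟩⟩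
  mul_mem' := by
    rintro a b ⟨ha, ha'⟩ ⟨hb, hb'⟩
    refine ⟨fun w hw => by rw [Perm.mul_apply, hb w hw, ha w hw], fun v hv => ?_⟩
    obtain ⟨k, hk, hak⟩ := ha' v hv
    obtain ⟨k', hk', hbk⟩ := hb' v hv
    exact ⟨k * k', K.mul_mem hk hk', hak.mul hbk⟩
  inv_mem' := by
    rintro a ⟨ha, ha'⟩
    refine ⟨fun w hw => by rw [Perm.inv_eq_iff_eq, ha w hw], fun v hv => ?_⟩
    obtain ⟨k, hk, hak⟩ := ha' v hv
    exact ⟨k⁻¹, K.inv_mem hk, hak.inv⟩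

theorem mem_levelProd_succ {K : Subgroup (Perm (Vtx d))} {n : ℕ} {g : Perm (Vtx d)}
    (hfix : ∀ w : Vtx d, w.length ≤ n → g w = w)
    (hsec : ∀ v : Vtx d, v.length = n → ∃ s ∈ levelProd K 1, HasSection g v s) :
    g ∈ levelProd K (n + 1) := by
  refine ⟨fun w hw => ?_, fun w hw => ?_⟩
  · rcases hw.lt_or_eq with hw | hw
    · exact hfix w (by omega)
    · obtain ⟨v, x, hv, rfl⟩ := List.exists_eq_append_singleton_of_length_eq_succ hw
      obtain ⟨s, hs, hgs⟩ := hsec v hv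
      rw [hgs, hs.1 [x] le_rfl]
  · obtain ⟨v, x, hv, rfl⟩ := List.exists_eq_append_singleton_of_length_eq_succ hw
    obtain ⟨s, hs, hgs⟩ := hsec v hv
    obtain ⟨k, hk, hsk⟩ := hs.2 [x] rfl
    exact ⟨k, hk, hgs.trans hsk⟩

theorem relIndex_fixingSubgroup_ne_zero {H : Subgroup (Perm (Vtx d))}
    (hH : ∀ g ∈ H, IsTreeAut d g) (n : ℕ) :
    (fixingSubgroup (Perm (Vtx d)) {v : Vtx d | v.length ≤ n}).relIndex H ≠ 0 := by
  have := (List.finite_length_le (Fin d) n).to_subtype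
  refine relIndex_ne_zero_of_labelling
    (β := {v : Vtx d | v.length ≤ n} → {v : Vtx d | v.length ≤ n})
    (fun g b => ∀ v, g v.1 = (b v).1)
    (fun g hg => ⟨fun v => ⟨g v.1, ((hH g hg).length_apply v.1).trans_le v.2⟩, fun v => rfl⟩)
    fun g _ g' _ b hb hb' => (mem_fixingSubgroup_iff _).2 fun v hv => ?_
  rw [Perm.smul_def, Perm.mul_apply, Perm.inv_eq_iff_eq, hb' ⟨v, hv⟩, hb ⟨v, hv⟩]

namespace IsRegularBranch

variable {G K : Subgroup (Perm (Vtx d))}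

theorem isTreeAut_of_mem (hGK : IsRegularBranch d G K) {k : Perm (Vtx d)} (hk : k ∈ K) :
    IsTreeAut d k :=
  hGK.treeAut k (hGK.le hk)

theorem exists_copy_singleton (hGK : IsRegularBranch d G K) (x : Fin d) {k : Perm (Vtx d)}
    (hk : k ∈ K) : ∃ c ∈ K, (∀ w, ¬ [x] <+: w → c w = w) ∧ HasSection c [x] k := by
  classical
  obtain ⟨c, hcK, -, hc⟩ := hGK.pi_le (x := fun u : Level d 1 => if u.1 = [x] then k else 1)
    ((Subgroup.mem_pi _).2 fun u _ => by split_ifs <;> simp [hk, K.one_mem])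
  refine ⟨c, hcK, fun w hw => ?_, fun w => by simpa using hc ⟨[x], rfl⟩ w⟩
  match w, hw with
  | [], _ => exact (hGK.isTreeAut_of_mem hcK).1
  | y :: t, hw =>
    have hyx : [y] ≠ [x] := by rintro ⟨⟩; exact hw ⟨t, rfl⟩
    simpa [hyx] using hc ⟨[y], rfl⟩ t

theorem exists_copy (hGK : IsRegularBranch d G K) (v : Vtx d) {k : Perm (Vtx d)} (hk : k ∈ K) :
    ∃ c ∈ K, (∀ w, ¬ v <+: w → c w = w) ∧ HasSection c v k := by
  induction v generalizing k with
  | nil => exact ⟨k, hk, fun w hw => absurd w.nil_prefix hw, HasSection.nil_iff.2 rfl⟩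
  | cons x v ih =>
    obtain ⟨c', hc'K, hc'supp, hc'⟩ := ih hk
    obtain ⟨c, hcK, hcsupp, hc⟩ := hGK.exists_copy_singleton x hc'K
    refine ⟨c, hcK, fun w hw => ?_, hc.trans hc'⟩
    by_cases hxw : [x] <+: w
    · obtain ⟨t, rfl⟩ := hxw
      rw [hc t, hc'supp t fun h => hw (List.cons_prefix_cons.2 ⟨rfl, h⟩)]
    · exact hcsupp w hxw

theorem le_levelProd_zero (hGK : IsRegularBranch d G K) : K ≤ levelProd K 0 := by
  refine fun k hk => ⟨fun w hw => ?_, fun v hv => ?_⟩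
  · rw [List.eq_nil_of_length_eq_zero (Nat.le_zero.1 hw)]
    exact (hGK.isTreeAut_of_mem hk).1
  · rw [List.eq_nil_of_length_eq_zero hv]
    exact ⟨k, hk, HasSection.nil_iff.2 rfl⟩

theorem relIndex_levelProd_one_inf_ne_zero (hGK : IsRegularBranch d G K) :
    (levelProd K 1).relIndex
      (fixingSubgroup (Perm (Vtx d)) {v : Vtx d | v.length ≤ 1} ⊓ K) ≠ 0 := by
  have : ((pi Set.univ fun _ : Level d 1 => K).subgroupOf (psiImage K 1)).FiniteIndex :=
    ⟨hGK.pi_relindex_ne_zero⟩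
  -- label `g ∈ Stab(1) ∩ K` by the class of `ψ₁(g)` modulo `K^d`
  refine relIndex_ne_zero_of_labelling
    (β := psiImage K 1 ⧸ (pi Set.univ fun _ : Level d 1 => K).subgroupOf (psiImage K 1))
    (fun g b => ∃ t, ∃ ht : t ∈ psiImage K 1,
      (∀ u : Level d 1, HasSection g u.1 (t u)) ∧ QuotientGroup.mk ⟨t, ht⟩ = b) ?_ ?_
  · intro g hg
    obtain ⟨hfix, hgK⟩ := mem_inf.1 hg
    have hfixu : ∀ u : Level d 1, g u.1 = u.1 := fun u =>
      (mem_fixingSubgroup_iff _).1 hfix u.1 u.2.le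
    have hsec : ∀ u : Level d 1, ∃ k, HasSection g u.1 k := fun u => by
      obtain ⟨h, -, hh⟩ := hGK.selfSimilar g (hGK.le hgK) u.1
      exact ⟨h, fun w => by rw [hh, hfixu]⟩
    choose t ht using hsec
    exact ⟨_, t, ⟨g, hgK, hfixu, ht⟩, ht, rfl⟩
  · rintro g hg g' hg' b ⟨t, htψ, ht, rfl⟩ ⟨t', ht'ψ, ht', hb⟩
    rw [eq_comm, QuotientGroup.eq, mem_subgroupOf, Subgroup.mem_pi] at hb
    refine ⟨fun w hw => ?_, fun u hu =>
      ⟨_, hb ⟨u, hu⟩ trivial, (ht ⟨u, hu⟩).inv.mul (ht' ⟨u, hu⟩)⟩⟩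
    have hfix := (mem_fixingSubgroup_iff _).1 (mem_inf.1 hg).1 w hw
    have hfix' := (mem_fixingSubgroup_iff _).1 (mem_inf.1 hg').1 w hw
    rw [Perm.smul_def] at hfix hfix'
    rw [Perm.mul_apply, hfix', Perm.inv_eq_iff_eq, hfix]

theorem relIndex_levelProd_one_ne_zero (hGK : IsRegularBranch d G K) :
    (levelProd K 1).relIndex K ≠ 0 :=
  relIndex_ne_zero_trans hGK.relIndex_levelProd_one_inf_ne_zero (by
    rw [inf_relIndex_right]
    exact relIndex_fixingSubgroup_ne_zero (fun k hk => hGK.isTreeAut_of_mem hk) 1)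

theorem relIndex_levelProd_succ_ne_zero (hGK : IsRegularBranch d G K) (n : ℕ) :
    (levelProd K (n + 1)).relIndex (levelProd K n) ≠ 0 := by
  have : ((levelProd K 1).subgroupOf K).FiniteIndex := ⟨hGK.relIndex_levelProd_one_ne_zero⟩
  have : Finite (Level d n) := (List.finite_length_eq (Fin d) n).to_subtype
  refine relIndex_ne_zero_of_labelling (β := Level d n → K ⧸ (levelProd K 1).subgroupOf K)
    (fun g b => ∀ u : Level d n, ∃ k, ∃ hk : k ∈ K,
      HasSection g u.1 k ∧ QuotientGroup.mk ⟨k, hk⟩ = b u)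
    (fun g hg => ?_) fun g hg g' hg' b hb hb' => ?_
  · choose k hk hgk using fun u : Level d n => hg.2 u.1 u.2
    exact ⟨fun u => QuotientGroup.mk ⟨k u, hk u⟩, fun u => ⟨k u, hk u, hgk u, rfl⟩⟩
  · refine mem_levelProd_succ (fun w hw => ?_) fun v hv => ?_
    · rw [Perm.mul_apply, hg'.1 w hw, Perm.inv_eq_iff_eq, hg.1 w hw]
    · obtain ⟨k, hk, hgk, hkb⟩ := hb ⟨v, hv⟩
      obtain ⟨k', hk', hgk', hkb'⟩ := hb' ⟨v, hv⟩
      rw [← hkb', QuotientGroup.eq, mem_subgroupOf] at hkb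
      exact ⟨k⁻¹ * k', hkb, hgk.inv.mul hgk'⟩

theorem relIndex_levelProd_ne_zero (hGK : IsRegularBranch d G K) (n : ℕ) :
    (levelProd K n).relIndex G ≠ 0 := by
  induction n with
  | zero =>
    exact fun h => hGK.relindex_ne_zero (relIndex_eq_zero_of_le_left hGK.le_levelProd_zero h)
  | succ n ih => exact relIndex_ne_zero_trans (hGK.relIndex_levelProd_succ_ne_zero n) ih

theorem mem_biSup_rist_of_supported (hGK : IsRegularBranch d G K) {n : ℕ} {F : Set (Vtx d)}
    (hF : F.Finite) (hFn : ∀ v ∈ F, v.length = n) {g : Perm (Vtx d)}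
    (hsec : ∀ v ∈ F, ∃ k ∈ K, HasSection g v k) (hsupp : ∀ w, (∀ v ∈ F, ¬ v <+: w) → g w = w) :
    g ∈ ⨆ v ∈ F, rist G v := by
  induction F, hF using Set.Finite.induction_on generalizing g with
  | empty =>
    rw [show g = 1 from Equiv.ext fun w => hsupp w (by simp)]
    exact one_mem _
  | @insert a F ha hF ih =>
    obtain ⟨k, hk, hgk⟩ := hsec a (Set.mem_insert a F)
    obtain ⟨c, hcK, hcsupp, hck⟩ := hGK.exists_copy a hk
    have hcF : ∀ v ∈ F, HasSection c v 1 := fun v hv w => hcsupp _ fun hav => ha <|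
      List.eq_of_prefix_append_of_length_eq hav (by rw [hFn a (.inl rfl), hFn v (.inr hv)]) ▸ hv
    have hrest : c⁻¹ * g ∈ ⨆ v ∈ F, rist G v := by
      refine ih (fun v hv => hFn v (.inr hv)) (fun v hv => ?_) fun w hw => ?_
      · obtain ⟨k', hk', hgk'⟩ := hsec v (.inr hv)
        exact ⟨1⁻¹ * k', mul_mem (inv_mem (one_mem K)) hk', (hcF v hv).inv.mul hgk'⟩
      · by_cases haw : a <+: w
        · obtain ⟨t, rfl⟩ := haw
          simpa using hck.inv.mul hgk t
        · rw [Perm.mul_apply, hsupp w fun v hv => hv.elim (· ▸ haw) (hw v), Perm.inv_eq_iff_eq,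
            hcsupp w haw]
    have hmono : (⨆ v ∈ F, rist G v) ≤ ⨆ v ∈ insert a F, rist G v :=
      biSup_mono fun v hv => Set.mem_insert_of_mem a hv
    rw [← mul_inv_cancel_left c g]
    refine mul_mem ?_ (hmono hrest)
    exact (le_iSup₂ (f := fun v (_ : v ∈ insert a F) => rist G v) a (Set.mem_insert a F))
      ⟨hGK.le hcK, hcsupp⟩

theorem levelProd_le_biSup_rist (hGK : IsRegularBranch d G K) (n : ℕ) :
    levelProd K n ≤ ⨆ v ∈ {v : Vtx d | v.length = n}, rist G v := fun g hg =>
  hGK.mem_biSup_rist_of_supported (List.finite_length_eq (Fin d) n) (fun _ hv => hv)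
    (fun v hv => hg.2 v hv) fun w hw => hg.1 w <| by
      by_contra h
      exact hw (w.take n) (by simp; omega) (List.take_prefix n w)

theorem relIndex_ne_zero_of_rist_le (hGK : IsRegularBranch d G K) {W : Subgroup (Perm (Vtx d))}
    (n : ℕ) (hW : ∀ v : Vtx d, v.length = n → rist G v ≤ W) : W.relIndex G ≠ 0 := fun h =>
  hGK.relIndex_levelProd_ne_zero n <|
    relIndex_eq_zero_of_le_left ((hGK.levelProd_le_biSup_rist n).trans (iSup₂_le hW)) h

end IsRegularBranch

section Rays

variable {G Q : Subgroup (Perm (Vtx d))}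

theorem orbit_eq_setOf_length (hG : ∀ g ∈ G, IsTreeAut d g) (htrans : SphericallyTransitive G)
    (v : Vtx d) : orbit G v = {w | w.length = v.length} := by
  ext w
  simp only [mem_orbit_iff, Subgroup.smul_def, Perm.smul_def, Subtype.exists, exists_prop]
  constructor
  · rintro ⟨g, hg, rfl⟩
    exact (hG g hg).length_apply v
  · exact fun hw => htrans v w hw.symm

theorem relIndex_rayStab_eq_zero (hd : 2 ≤ d) (hG : ∀ g ∈ G, IsTreeAut d g)
    (htrans : SphericallyTransitive G) (ξ : ℕ → Fin d) : (rayStab G ξ).relIndex G = 0 := by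
  by_contra h
  have hdvd (m : ℕ) : d ^ m ∣ (rayStab G ξ).relIndex G := by
    have hle : (rayStab G ξ).subgroupOf G ≤ stabilizer G (raySegment ξ m) :=
      fun g hg => (mem_subgroupOf.1 hg).2 m
    have hcard : (orbit G (raySegment ξ m)).ncard = d ^ m := by
      rw [orbit_eq_setOf_length hG htrans, length_raySegment, ← Nat.card_coe_set_eq]
      exact (Nat.card_eq_fintype_card (α := List.Vector (Fin d) m)).trans (by simp)
    have := index_dvd_of_le hle
    rwa [index_stabilizer, hcard] at this
  exact (Nat.lt_pow_self (n := _) (by omega)).not_ge (Nat.le_of_dvd (Nat.pos_of_ne_zero h) (hdvd _))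

/-- The vertices lying on no ray of the orbit `Q • ζ`. -/
def offOrbit (Q : Subgroup (Perm (Vtx d))) (ζ : ℕ → Fin d) : Set (Vtx d) :=
  {v | ∀ q ∈ Q, q v ≠ raySegment ζ v.length}

theorem rist_le_rayStab {ζ : ℕ → Fin d} {v : Vtx d} (hv : v ∈ offOrbit Q ζ) :
    rist G v ≤ rayStab G ζ := by
  rintro g ⟨hgG, hg⟩
  refine ⟨hgG, fun n => hg _ fun hpre => hv 1 (one_mem Q) ?_⟩
  have hlen : v.length ≤ n := length_raySegment ζ n ▸ hpre.length_le
  rw [Perm.one_apply, List.prefix_iff_eq_take.1 hpre, take_raySegment ζ hlen, length_raySegment]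

theorem IsTreeAut.conj_mem_rist {q g : Perm (Vtx d)} (hq : IsTreeAut d q) (hqG : q ∈ G)
    {v : Vtx d} (hg : g ∈ rist G v) : q * g * q⁻¹ ∈ rist G (q v) := by
  refine ⟨mul_mem (mul_mem hqG hg.1) (inv_mem hqG), fun w hw => ?_⟩
  have hfix : g (q⁻¹ w) = q⁻¹ w := hg.2 _ fun h => hw (by simpa using hq.apply_prefix h)
  rw [Perm.mul_apply, Perm.mul_apply, hfix, ← Perm.mul_apply, mul_inv_cancel, Perm.one_apply]

theorem IsTreeAut.apply_mem_offOrbit {q : Perm (Vtx d)} (hq : IsTreeAut d q) (hqQ : q ∈ Q)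
    {ζ : ℕ → Fin d} {v : Vtx d} (hv : v ∈ offOrbit Q ζ) : q v ∈ offOrbit Q ζ :=
  fun q' hq' h => hv (q' * q) (mul_mem hq' hqQ) (by rwa [hq.length_apply] at h)

def ristOffOrbit (G Q : Subgroup (Perm (Vtx d))) (ζ : ℕ → Fin d) : Subgroup (Perm (Vtx d)) :=
  closure (⋃ v ∈ offOrbit Q ζ, (rist G v : Set (Perm (Vtx d))))

def seedSubgroup (G Q : Subgroup (Perm (Vtx d))) (ζ : ℕ → Fin d) : Subgroup (Perm (Vtx d)) :=
  Q ⊔ ristOffOrbit G Q ζ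

theorem ristOffOrbit_le_rayStab (ζ : ℕ → Fin d) : ristOffOrbit G Q ζ ≤ rayStab G ζ :=
  (closure_le _).2 (Set.iUnion₂_subset fun _ hv => rist_le_rayStab hv)

theorem le_normalizer_ristOffOrbit (hQG : Q ≤ G) (hQ : ∀ q ∈ Q, IsTreeAut d q) (ζ : ℕ → Fin d) :
    Q ≤ normalizer (ristOffOrbit G Q ζ : Set (Perm (Vtx d))) := by
  refine le_normalizer_closure_iff.2 fun q hq g hg => ?_
  obtain ⟨v, hv, hg⟩ : ∃ v ∈ offOrbit Q ζ, g ∈ rist G v := by simpa using hg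
  exact subset_closure (Set.mem_biUnion ((hQ q hq).apply_mem_offOrbit hq hv)
    ((hQ q hq).conj_mem_rist (hQG hq) hg))

theorem rist_le_seedSubgroup {ζ : ℕ → Fin d} {v : Vtx d} (hv : v ∈ offOrbit Q ζ) :
    rist G v ≤ seedSubgroup G Q ζ :=
  fun _ hg => mem_sup_right (subset_closure (Set.mem_biUnion hv hg))

theorem seedSubgroup_le (hQG : Q ≤ G) (ζ : ℕ → Fin d) : seedSubgroup G Q ζ ≤ G :=
  sup_le hQG <| (closure_le G).2 <| Set.iUnion₂_subset fun _ _ _ hg => hg.1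

theorem relIndex_seedSubgroup_eq_zero (hd : 2 ≤ d) {K : Subgroup (Perm (Vtx d))}
    (hGK : IsRegularBranch d G K) (hQG : Q ≤ G) (hQfin : (Q : Set (Perm (Vtx d))).Finite)
    (ζ : ℕ → Fin d) : (seedSubgroup G Q ζ).relIndex G = 0 := by
  have hNG : (ristOffOrbit G Q ζ).relIndex G = 0 :=
    relIndex_eq_zero_of_le_left (ristOffOrbit_le_rayStab ζ)
      (relIndex_rayStab_eq_zero hd hGK.treeAut hGK.transitive ζ)
  have hmul := relIndex_mul_relIndex _ _ G le_sup_right (seedSubgroup_le hQG ζ)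
  rw [hNG, mul_eq_zero] at hmul
  exact hmul.resolve_left <| relIndex_sup_ne_zero_of_le_normalizer hQfin <|
    le_normalizer_ristOffOrbit hQG (fun q hq => hGK.treeAut q (hQG hq)) ζ

theorem exists_level_subset_offOrbit (hQfin : (Q : Set (Perm (Vtx d))).Finite)
    (hQ : ∀ q ∈ Q, IsTreeAut d q) {ζ η : ℕ → Fin d}
    (h : ∀ q ∈ Q, ∃ n, q (raySegment ζ n) ≠ raySegment η n) :
    ∃ m, ∀ v : Vtx d, v.length = m → v ∈ offOrbit Q ζ ∨ v ∈ offOrbit Q η := by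
  obtain ⟨m, hm⟩ := ((hQfin.eventually_all (l := atTop)).2 fun q hq =>
    (hQ q hq).eventually_apply_raySegment_ne (h q hq)).exists
  refine ⟨m, fun v hv => ?_⟩
  by_contra! hvv
  obtain ⟨hζ, hη⟩ := hvv
  simp only [offOrbit, Set.mem_ofPred_eq, not_forall, not_not, hv] at hζ hη
  obtain ⟨q, hq, hqv⟩ := hζ
  obtain ⟨q', hq', hq'v⟩ := hη
  exact hm (q' * q⁻¹) (mul_mem hq' (inv_mem hq)) (by rw [Perm.mul_apply, ← hqv]; simpa using hq'v)

theorem exists_mem_apply_raySegment_eq {K W : Subgroup (Perm (Vtx d))}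
    (hGK : IsRegularBranch d G K) (hQG : Q ≤ G) (hQfin : (Q : Set (Perm (Vtx d))).Finite)
    (hW : IsWeaklyMaximalIn G W) {ζ η : ℕ → Fin d} (hζ : seedSubgroup G Q ζ ≤ W)
    (hη : seedSubgroup G Q η ≤ W) : ∃ q ∈ Q, ∀ n, q (raySegment ζ n) = raySegment η n := by
  by_contra! h
  obtain ⟨m, hm⟩ := exists_level_subset_offOrbit hQfin (fun q hq => hGK.treeAut q (hQG hq)) h
  refine hGK.relIndex_ne_zero_of_rist_le m (fun v hv => ?_) hW.2.1
  rcases hm v hv with hv | hv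
  exacts [(rist_le_seedSubgroup hv).trans hζ, (rist_le_seedSubgroup hv).trans hη]

theorem finite_setOf_exists_apply_raySegment_eq (hQfin : (Q : Set (Perm (Vtx d))).Finite)
    (ζ : ℕ → Fin d) : {η | ∃ q ∈ Q, ∀ n, q (raySegment ζ n) = raySegment η n}.Finite := by
  have := hQfin.to_subtype
  refine Set.finite_coe_iff.1 <| Finite.of_injective
    (fun η : {η | ∃ q ∈ Q, ∀ n, q (raySegment ζ n) = raySegment η n} =>
      (⟨η.2.choose, η.2.choose_spec.1⟩ : (Q : Set (Perm (Vtx d))))) fun η η' h => ?_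
  have h' : η.2.choose = η'.2.choose := congrArg Subtype.val h
  exact Subtype.ext <| raySegment_injective <| funext fun n => by
    rw [← η.2.choose_spec.2 n, ← η'.2.choose_spec.2 n, h']

end Rays

theorem uncountable_boundary (hd : 2 ≤ d) : Uncountable (ℕ → Fin d) := by
  rw [← Cardinal.aleph0_lt_mk_iff, Cardinal.mk_arrow]
  simpa using (Cardinal.cantor _).trans_le (Cardinal.power_le_power_right (by exact_mod_cast hd))

/-- If a finitely generated regular branch group `G` contains a finite subgroup `Q`
fixing no boundary point, then the set of non-parabolic weakly maximal subgroups of `G`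
containing `Q` is uncountable. -/
theorem uncountable_nonparabolic_weaklyMaximal {d : ℕ} (hd : 2 ≤ d)
    (G K : Subgroup (Equiv.Perm (Vtx d))) (hGK : IsRegularBranch d G K)
    (hfg : Group.FG G) (Q : Subgroup (Equiv.Perm (Vtx d))) (hQG : Q ≤ G)
    (hQfin : (Q : Set (Equiv.Perm (Vtx d))).Finite)
    (hQnofix : ∀ ξ : ℕ → Fin d, ∃ g ∈ Q, ∃ n : ℕ,
      g (raySegment ξ n) ≠ raySegment ξ n) :
    ¬ ({W : Subgroup (Equiv.Perm (Vtx d)) | IsWeaklyMaximalIn G W ∧ Q ≤ W ∧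
        ∀ ξ : ℕ → Fin d, W ≠ rayStab G ξ}).Countable := by
  intro hcount
  choose Φ hΦ hΦW using fun ζ => exists_isWeaklyMaximalIn_ge hfg (seedSubgroup_le hQG ζ)
    (relIndex_seedSubgroup_eq_zero hd hGK hQG hQfin ζ)
  have hQΦ (ζ : ℕ → Fin d) : Q ≤ Φ ζ := le_sup_left.trans (hΦ ζ)
  have hΦmem (ζ : ℕ → Fin d) : IsWeaklyMaximalIn G (Φ ζ) ∧ Q ≤ Φ ζ ∧
      ∀ ξ : ℕ → Fin d, Φ ζ ≠ rayStab G ξ := by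
    refine ⟨hΦW ζ, hQΦ ζ, fun ξ hξ => ?_⟩
    obtain ⟨q, hq, n, hn⟩ := hQnofix ξ
    exact hn (((hξ ▸ hQΦ ζ) hq).2 n)
  have hfibre (W : Subgroup (Equiv.Perm (Vtx d))) : (Φ ⁻¹' {W}).Countable := by
    rcases (Φ ⁻¹' {W}).eq_empty_or_nonempty with h | ⟨ζ, hζ⟩
    · simp [h]
    refine (finite_setOf_exists_apply_raySegment_eq hQfin ζ).countable.mono fun η hη => ?_
    exact exists_mem_apply_raySegment_eq hGK hQG hQfin (hΦW ζ) (hΦ ζ)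
      ((hΦ η).trans_eq (hη.trans hζ.symm))
  have huniv : (Set.univ : Set (ℕ → Fin d)).Countable :=
    (hcount.biUnion fun W _ => hfibre W).mono fun ζ _ => Set.mem_iUnion₂.2 ⟨Φ ζ, hΦmem ζ, rfl⟩
  exact (uncountable_boundary hd).not_countable (Set.countable_univ_iff.1 huniv)
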